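/- Let 0 < γ ≤ 1, ρ ∈ (0,1) and A ≥ γ. Define ρ₀ : ℝ → [0,1] by ρ₀(u) = ρ for u < 0, ρ₀(u) = 0 for 0 ≤ u < A−γ, ρ₀(u) = (u − A + γ)/(2γ) for A−γ ≤ u < A−γ+2ργ, and ρ₀(u) = ρ for u ≥ A−γ+2ργ. Then ∫_ℝ h_ρ(ρ₀(u)) du = −A·log(1−ρ) − γρ. -/

import Mathlib

/-!
Where the profile equals `ρ` the integrand vanishes, so only `[0, A - γ + 2ργ]` contributes. On
`[0, A - γ]` the integrand is the constant `h_ρ(0) = -log (1 - ρ)`; on the ramp the substitution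
`z = (u - A + γ) / (2γ)` turns the integral into `2γ ∫₀^ρ h_ρ`, which is evaluated with the
primitive `z² log z / 2 - z² / 4` of `z log z`.
-/

open MeasureTheory

/-- `h_ρ(z) = z log(z/ρ) + (1-z) log((1-z)/(1-ρ))` (with `0 log 0 = 0`,
which holds automatically since `Real.log 0 = 0`). -/
noncomputable def hRho (ρ z : ℝ) : ℝ :=
  z * Real.log (z / ρ) + (1 - z) * Real.log ((1 - z) / (1 - ρ))

/-- The initial profile used in the lower bound for `A ≥ γ`. -/
noncomputable def prof16 (γ ρ A u : ℝ) : ℝ :=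
  if u < 0 then ρ
  else if u < A - γ then 0
  else if u < A - γ + 2 * ρ * γ then (u - A + γ) / (2 * γ)
  else ρ

open Real Set intervalIntegral

lemma mul_log_div (x : ℝ) {y : ℝ} (hy : y ≠ 0) : x * log (x / y) = x * log x - x * log y := by
  rcases eq_or_ne x 0 with rfl | hx
  · simp
  · rw [log_div hx hy, mul_sub]

section hRho

variable {ρ : ℝ}

lemma hRho_zero (ρ : ℝ) : hRho ρ 0 = -log (1 - ρ) := by
  simp [hRho, log_inv]

lemma hRho_self (hρ0 : ρ ≠ 0) (hρ1 : ρ ≠ 1) : hRho ρ ρ = 0 := by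
  simp [hRho, div_self hρ0, div_self (sub_ne_zero.2 hρ1.symm)]

lemma hRho_eq (hρ0 : ρ ≠ 0) (hρ1 : ρ ≠ 1) (z : ℝ) :
    hRho ρ z = z * log z + (1 - z) * log (1 - z) - z * log ρ - (1 - z) * log (1 - ρ) := by
  rw [hRho, mul_log_div z hρ0, mul_log_div (1 - z) (sub_ne_zero.2 hρ1.symm)]
  ring

lemma continuous_hRho (hρ0 : ρ ≠ 0) (hρ1 : ρ ≠ 1) : Continuous (hRho ρ) := by
  rw [funext (hRho_eq hρ0 hρ1)]
  have h := continuous_mul_log.comp (continuous_sub_left (1 : ℝ))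
  exact ((continuous_mul_log.add h).sub (by fun_prop)).sub (by fun_prop)

end hRho

noncomputable def mulLogPrimitive (w : ℝ) : ℝ := w ^ 2 / 2 * log w - w ^ 2 / 4

lemma hasDerivAt_mulLogPrimitive {w : ℝ} (hw : w ≠ 0) :
    HasDerivAt mulLogPrimitive (w * log w) w := by
  have h := (((hasDerivAt_pow 2 w).div_const 2).mul (hasDerivAt_log hw)).sub
    ((hasDerivAt_pow 2 w).div_const 4)
  exact h.congr_deriv (by norm_num; field_simp; ring)

lemma continuous_mulLogPrimitive : Continuous mulLogPrimitive := by
  have h : Continuous fun w : ℝ => w / 2 * (w * log w) := by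
    have := continuous_mul_log
    fun_prop
  refine Continuous.sub ?_ (by fun_prop : Continuous fun w : ℝ => w ^ 2 / 4)
  convert h using 1
  funext w
  ring

noncomputable def hRhoPrimitive (ρ z : ℝ) : ℝ :=
  mulLogPrimitive z - mulLogPrimitive (1 - z) - z ^ 2 / 2 * log ρ + (1 - z) ^ 2 / 2 * log (1 - ρ)

section hRhoPrimitive

variable {ρ : ℝ}

lemma hasDerivAt_hRhoPrimitive (hρ0 : ρ ≠ 0) (hρ1 : ρ ≠ 1) {z : ℝ} (hz0 : z ≠ 0)
    (hz1 : z ≠ 1) :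
    HasDerivAt (hRhoPrimitive ρ) (hRho ρ z) z := by
  have hflip : HasDerivAt (fun z : ℝ => 1 - z) (-1) z := by
    simpa using (hasDerivAt_id z).const_sub 1
  have h := (((hasDerivAt_mulLogPrimitive hz0).sub
    ((hasDerivAt_mulLogPrimitive (sub_ne_zero.2 hz1.symm)).comp z hflip)).sub
    (((hasDerivAt_pow 2 z).div_const 2).mul_const (log ρ))).add
    ((((hasDerivAt_pow 2 (1 - z)).comp z hflip).div_const 2).mul_const (log (1 - ρ)))
  exact h.congr_deriv (by rw [hRho_eq hρ0 hρ1]; norm_num; ring)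

lemma continuous_hRhoPrimitive (ρ : ℝ) : Continuous (hRhoPrimitive ρ) := by
  have := continuous_mulLogPrimitive
  unfold hRhoPrimitive
  fun_prop

lemma integral_hRho (hρ0 : ρ ≠ 0) (hρ1 : ρ ≠ 1) {x : ℝ} (hx0 : 0 ≤ x) (hx1 : x ≤ 1) :
    ∫ z in 0..x, hRho ρ z = hRhoPrimitive ρ x - hRhoPrimitive ρ 0 :=
  integral_eq_sub_of_hasDerivAt_of_le hx0 (continuous_hRhoPrimitive ρ).continuousOn
    (fun _ hz => hasDerivAt_hRhoPrimitive hρ0 hρ1 hz.1.ne' (hz.2.trans_le hx1).ne)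
    ((continuous_hRho hρ0 hρ1).intervalIntegrable 0 x)

lemma integral_hRho_zero_self (hρ0 : 0 < ρ) (hρ1 : ρ < 1) :
    ∫ z in 0..ρ, hRho ρ z = -(ρ + log (1 - ρ)) / 2 := by
  rw [integral_hRho hρ0.ne' hρ1.ne hρ0.le hρ1.le]
  simp only [hRhoPrimitive, mulLogPrimitive, sub_zero, log_zero, log_one]
  ring

end hRhoPrimitive

section prof16

variable {γ ρ A u : ℝ}

lemma prof16_of_mem_Ioo_flat (hu : u ∈ Ioo 0 (A - γ)) : prof16 γ ρ A u = 0 := by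
  simp [prof16, hu.1.not_gt, hu.2]

lemma prof16_of_mem_Ioo_ramp (hA : γ ≤ A) (hu : u ∈ Ioo (A - γ) (A - γ + 2 * ρ * γ)) :
    prof16 γ ρ A u = (u - (A - γ)) / (2 * γ) := by
  rw [prof16, if_neg (by linarith [hu.1]), if_neg hu.1.not_gt, if_pos hu.2, sub_sub_eq_add_sub,
    sub_add_eq_add_sub]

lemma prof16_of_notMem_Icc (hγ : 0 ≤ γ) (hρ : 0 ≤ ρ)
    (hu : u ∉ Icc 0 (A - γ + 2 * ρ * γ)) : prof16 γ ρ A u = ρ := by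
  have : 0 ≤ 2 * ρ * γ := by positivity
  rw [mem_Icc, not_and_or, not_le, not_le] at hu
  unfold prof16
  split_ifs <;> first | rfl | (exfalso; rcases hu with hu | hu <;> linarith)

end prof16

theorem integral_comp_prof16 {γ ρ A : ℝ} {f : ℝ → ℝ} (hf : Continuous f) (hfρ : f ρ = 0)
    (hγ : 0 < γ) (hρ : 0 ≤ ρ) (hA : γ ≤ A) :
    ∫ u, f (prof16 γ ρ A u) = (A - γ) * f 0 + 2 * γ * ∫ z in 0..ρ, f z := by
  have hc : 0 ≤ A - γ := sub_nonneg.2 hA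
  have hcb : A - γ ≤ A - γ + 2 * ρ * γ := le_add_of_nonneg_right (by positivity)
  have hflat : EqOn (fun u => f (prof16 γ ρ A u)) (fun _ => f 0) (uIoo 0 (A - γ)) := by
    intro u hu
    rw [uIoo_of_le hc] at hu
    simp only [prof16_of_mem_Ioo_flat hu]
  have hramp : EqOn (fun u => f (prof16 γ ρ A u)) (fun u => f ((u - (A - γ)) / (2 * γ)))
      (uIoo (A - γ) (A - γ + 2 * ρ * γ)) := by
    intro u hu
    rw [uIoo_of_le hcb] at hu
    simp only [prof16_of_mem_Ioo_ramp hA hu]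
  have hramp_integral : ∫ u in (A - γ)..(A - γ + 2 * ρ * γ), f ((u - (A - γ)) / (2 * γ))
      = 2 * γ * ∫ z in 0..ρ, f z := by
    rw [integral_comp_sub_right (fun v => f (v / (2 * γ))), integral_comp_div _ (by positivity),
      sub_self, zero_div, add_sub_cancel_left, smul_eq_mul,
      show 2 * ρ * γ / (2 * γ) = ρ by field_simp]
  calc ∫ u, f (prof16 γ ρ A u)
      = ∫ u in Icc 0 (A - γ + 2 * ρ * γ), f (prof16 γ ρ A u) := by
        refine (setIntegral_eq_integral_of_forall_compl_eq_zero fun u hu => ?_).symm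
        rw [prof16_of_notMem_Icc hγ.le hρ hu, hfρ]
    _ = (∫ u in 0..(A - γ), f (prof16 γ ρ A u))
          + ∫ u in (A - γ)..(A - γ + 2 * ρ * γ), f (prof16 γ ρ A u) := by
        rw [integral_add_adjacent_intervals (intervalIntegrable_const.congr_uIoo hflat.symm)
          (((hf.comp (by fun_prop)).intervalIntegrable _ _).congr_uIoo hramp.symm),
          integral_of_le (hc.trans hcb), integral_Icc_eq_integral_Ioc]
    _ = (A - γ) * f 0 + 2 * γ * ∫ z in 0..ρ, f z := by
        rw [integral_congr_uIoo hflat, integral_congr_uIoo hramp, hramp_integral,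
          intervalIntegral.integral_const, sub_zero, smul_eq_mul]

theorem stmt16_general (γ ρ A : ℝ) (hγ0 : 0 < γ)
    (hρ0 : 0 < ρ) (hρ1 : ρ < 1) (hA : γ ≤ A) :
    ∫ u : ℝ, hRho ρ (prof16 γ ρ A u) = -A * Real.log (1 - ρ) - γ * ρ := by
  rw [integral_comp_prof16 (continuous_hRho hρ0.ne' hρ1.ne) (hRho_self hρ0.ne' hρ1.ne) hγ0
    hρ0.le hA, hRho_zero, integral_hRho_zero_self hρ0 hρ1]
  ring

/-- The relative entropy cost of the profile `prof16` is `-A log(1-ρ) - γρ`. -/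
theorem stmt16 (γ ρ A : ℝ) (hγ0 : 0 < γ) (hγ1 : γ ≤ 1)
    (hρ0 : 0 < ρ) (hρ1 : ρ < 1) (hA : γ ≤ A) :
    ∫ u : ℝ, hRho ρ (prof16 γ ρ A u) = -A * Real.log (1 - ρ) - γ * ρ :=
  stmt16_general γ ρ A hγ0 hρ0 hρ1 hA
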